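/- Tetali's identity for unweighted graphs: let G = (V,E) be a finite connected simple graph with n vertices and m edges. Then for the simple random walk on G, the sum of expected hitting times over all ordered pairs of adjacent vertices satisfies ∑_{(x,y) : {x,y} ∈ E} E^x(τ_y) = 2m(n − 1). -/

import Mathlib

open Finset

variable {V : Type*} [Fintype V] [DecidableEq V]

/-- The weight (generalized degree) of a node: `μ_x = ∑_y c x y`. -/
noncomputable def nodeWeight (c : V → V → ℝ) (x : V) : ℝ := ∑ y, c x y

/-- Transition probabilities of the random walk: `p x y = c x y / μ x`. -/
noncomputable def transProb (c : V → V → ℝ) (x y : V) : ℝ := c x y / nodeWeight c x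

/-- The transition matrix killed at the target node `y` (rows at `y` set to zero), so that
`(killed c y ^ n) x z = P^x(X_0 ≠ y, …, X_{n-1} ≠ y, X_n = z)`. -/
noncomputable def killed (c : V → V → ℝ) (y : V) : Matrix V V ℝ :=
  Matrix.of fun u v => if u = y then 0 else transProb c u v

/-- The survival probability `P^x(τ_y > n)` of the walk started at `x`. -/
noncomputable def survival (c : V → V → ℝ) (x y : V) (n : ℕ) : ℝ :=
  ∑ z ∈ Finset.univ.erase y, (killed c y ^ n) x z

/-- The expected hitting time `E^x(τ_y) = ∑_{n ≥ 0} P^x(τ_y > n)`. -/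
noncomputable def hitExp (c : V → V → ℝ) (x y : V) : ℝ := ∑' n : ℕ, survival c x y n

/-- `U_z^{xy}`: the expected number of times `0 ≤ k < τ_y` with `X_k = z`, for the walk
started at `x`. -/
noncomputable def visitExp (c : V → V → ℝ) (x y z : V) : ℝ :=
  if z = y then 0 else ∑' n : ℕ, (killed c y ^ n) x z

/-!
Fix the target `y` and let `h x = E^x(τ_y)`. First-step analysis gives `h y = 0` and
`h x = 1 + ∑_w p(x,w) h w` for `x ≠ y`. Multiplying by `deg x` and summing over `x`,
reversibility `deg x · p(x,w) = c(x,w) = c(w,x)` makes `∑_x deg x · h x` appear on both sides,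
and it cancels to leave `∑_{w ~ y} h w = 2m - deg y`; summing over `y` gives `2m(n - 1)`.
The hitting times are finite because from every vertex the walk reaches `y` within `n` steps
with positive probability, so `P^x(τ_y > k)` decays geometrically in `k`.
-/

theorem sum_ite_eq_zero_sub {ι M : Type*} [Fintype ι] [DecidableEq ι] [AddCommGroup M]
    (f : ι → M) (y : ι) :
    ∑ x, (if x = y then 0 else f x) = ∑ x, f x - f y := by
  simp [Finset.sum_ite, Finset.filter_ne', Finset.sum_erase_eq_sub]

theorem summable_of_add_le_mul {f : ℕ → ℝ} {N : ℕ} {ρ : ℝ} (hN : 0 < N) (hf : ∀ n, 0 ≤ f n)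
    (hρ₀ : 0 ≤ ρ) (hρ₁ : ρ < 1) (h : ∀ n, f (n + N) ≤ f n * ρ) : Summable f := by
  have : NeZero N := ⟨hN.ne'⟩
  have hblock : ∀ k i, f (k * N + i) ≤ ρ ^ k * f i := by
    intro k i
    induction k with
    | zero => simp
    | succ k ih =>
      calc f ((k + 1) * N + i) = f (k * N + i + N) := by ring_nf
        _ ≤ f (k * N + i) * ρ := h _
        _ ≤ ρ ^ k * f i * ρ := by gcongr
        _ = ρ ^ (k + 1) * f i := by ring
  rw [← (Nat.divModEquiv N).symm.summable_iff]
  refine .of_nonneg_of_le (fun _ => hf _) (fun p => hblock p.1 p.2) ?_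
  exact (summable_geometric_of_lt_one hρ₀ hρ₁).mul_of_nonneg .of_finite
    (fun _ => pow_nonneg hρ₀ _) (fun _ => hf _)

section Killed

variable {c : V → V → ℝ} {y : V}

theorem killed_apply_of_ne {x : V} (hxy : x ≠ y) (v : V) :
    killed c y x v = c x v / nodeWeight c x := by
  simp [killed, transProb, hxy]

theorem killed_pow_apply_self_of_ne (n : ℕ) {z : V} (hz : z ≠ y) : (killed c y ^ n) y z = 0 := by
  cases n with
  | zero => exact Matrix.one_apply_ne hz.symm
  | succ n => simp [pow_succ', Matrix.mul_apply, killed]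

theorem sum_killed_apply (x : V) :
    ∑ v, killed c y x v = if x = y then 0 else nodeWeight c x / nodeWeight c x := by
  split_ifs with hxy
  · simp [killed, hxy]
  · simp_rw [killed_apply_of_ne hxy, ← Finset.sum_div]
    rfl

theorem survival_self (n : ℕ) : survival c y y n = 0 :=
  Finset.sum_eq_zero fun _ hz => killed_pow_apply_self_of_ne n (Finset.ne_of_mem_erase hz)

theorem survival_zero (x : V) : survival c x y 0 = if x = y then 0 else 1 := by
  simp [survival, Matrix.one_apply, Finset.sum_ite_eq]

theorem survival_add (x : V) (a b : ℕ) :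
    survival c x y (a + b) = ∑ w, (killed c y ^ a) x w * survival c w y b := by
  simp only [survival, pow_add, Matrix.mul_apply, Finset.mul_sum]
  exact Finset.sum_comm

theorem survival_succ (x : V) (n : ℕ) :
    survival c x y (n + 1) = ∑ w, killed c y x w * survival c w y n := by
  rw [add_comm, survival_add, pow_one]

theorem sum_killed_le_one (x : V) : ∑ v, killed c y x v ≤ 1 := by
  rw [sum_killed_apply]
  split_ifs
  exacts [zero_le_one, div_self_le_one _]

variable (hc : ∀ u v, 0 ≤ c u v)
include hc

theorem killed_nonneg (u v : V) : 0 ≤ killed c y u v := by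
  by_cases huy : u = y
  · simp [killed, huy]
  · rw [killed_apply_of_ne huy]
    exact div_nonneg (hc u v) (Finset.sum_nonneg fun v _ => hc u v)

theorem killed_pow_nonneg (n : ℕ) (u v : V) : 0 ≤ (killed c y ^ n) u v := by
  induction n generalizing v with
  | zero => rw [pow_zero, Matrix.one_apply]; split_ifs <;> norm_num
  | succ n ih =>
    rw [pow_succ, Matrix.mul_apply]
    exact Finset.sum_nonneg fun w _ => mul_nonneg (ih w) (killed_nonneg hc w v)

theorem survival_nonneg (x : V) (n : ℕ) : 0 ≤ survival c x y n :=
  Finset.sum_nonneg fun z _ => killed_pow_nonneg hc n x z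

/-- The `w = y` term of `survival_add` vanishes: the killed walk never leaves `y`. -/
theorem survival_add_le {a b : ℕ} {r : ℝ} (hr : ∀ w, survival c w y b ≤ r) (x : V) :
    survival c x y (a + b) ≤ survival c x y a * r := by
  rw [survival_add, ← Finset.sum_erase_add _ _ (Finset.mem_univ y), survival_self, mul_zero,
    add_zero, survival, Finset.sum_mul]
  exact Finset.sum_le_sum fun w _ => mul_le_mul_of_nonneg_left (hr w) (killed_pow_nonneg hc a x w)

theorem survival_le_one (x : V) (n : ℕ) : survival c x y n ≤ 1 := by
  have hone : ∀ w, survival c w y 1 ≤ 1 := fun w =>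
    calc survival c w y 1 ≤ ∑ v, killed c y w v := by
          rw [survival, pow_one]
          exact Finset.sum_le_sum_of_subset_of_nonneg (Finset.subset_univ _)
            fun v _ _ => killed_nonneg hc w v
      _ ≤ 1 := sum_killed_le_one w
  induction n generalizing x with
  | zero => rw [survival_zero]; split_ifs <;> norm_num
  | succ n ih => exact (survival_add_le hc hone x).trans (by simpa using ih x)

theorem survival_succ_lt_one {x u : V} {n : ℕ} (hxy : x ≠ y) (hxu : 0 < c x u)
    (hu : survival c u y n < 1) : survival c x y (n + 1) < 1 := by
  have hx : 0 < nodeWeight c x :=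
    hxu.trans_le (Finset.single_le_sum (fun v _ => hc x v) (Finset.mem_univ u))
  have hxu' : 0 < killed c y x u := by rw [killed_apply_of_ne hxy]; positivity
  calc survival c x y (n + 1) = ∑ w, killed c y x w * survival c w y n := survival_succ x n
    _ < ∑ w, killed c y x w :=
      Finset.sum_lt_sum
        (fun w _ => mul_le_of_le_one_right (killed_nonneg hc x w) (survival_le_one hc w n))
        ⟨u, Finset.mem_univ u, mul_lt_of_lt_one_right hxu' hu⟩
    _ = 1 := by rw [sum_killed_apply, if_neg hxy, div_self hx.ne']

end Killed

section Connected

variable {c : V → V → ℝ} (hc : ∀ u v, 0 ≤ c u v) {G : SimpleGraph V}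
  (hG : ∀ u v, G.Adj u v → 0 < c u v)
include hc hG

theorem survival_lt_one_of_walk {x y : V} (p : G.Walk x y) {n : ℕ} (hn : p.length ≤ n) :
    survival c x y n < 1 := by
  induction p generalizing n with
  | nil => rw [survival_self]; exact one_pos
  | @cons x u y hxu p ih =>
    obtain ⟨m, rfl⟩ : ∃ m, n = m + 1 :=
      Nat.exists_eq_succ_of_ne_zero (by rw [SimpleGraph.Walk.length_cons] at hn; omega)
    by_cases hxy : x = y
    · subst hxy; rw [survival_self]; exact one_pos
    · exact survival_succ_lt_one hc hxy (hG x u hxu) (ih (by simpa using hn))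

theorem summable_survival (hconn : G.Connected) (x y : V) : Summable (survival c x y) := by
  have : Nonempty V := ⟨x⟩
  obtain ⟨v, hv⟩ := Finite.exists_max fun w => survival c w y (Fintype.card V)
  refine summable_of_add_le_mul Fintype.card_pos (survival_nonneg hc x) (survival_nonneg hc v _)
    ?_ fun n => survival_add_le hc hv x
  obtain ⟨p⟩ := hconn.preconnected v y
  exact survival_lt_one_of_walk hc hG p.toPath p.toPath.2.length_lt.le

end Connected

section HitExp

variable {c : V → V → ℝ} {y : V}

theorem hitExp_eq (hsum : ∀ w, Summable (survival c w y)) (x : V) :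
    hitExp c x y = (if x = y then 0 else 1) + ∑ w, killed c y x w * hitExp c w y := by
  rw [hitExp, (hsum x).tsum_eq_zero_add, survival_zero]
  congr 1
  calc ∑' n, survival c x y (n + 1) = ∑' n, ∑ w, killed c y x w * survival c w y n :=
        tsum_congr fun n => survival_succ x n
    _ = ∑ w, ∑' n, killed c y x w * survival c w y n :=
        Summable.tsum_finsetSum fun w _ => (hsum w).mul_left _
    _ = ∑ w, killed c y x w * hitExp c w y := by simp_rw [tsum_mul_left, hitExp]

variable (hc : ∀ u v, 0 ≤ c u v)
include hc

theorem nodeWeight_mul_killed (x w : V) :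
    nodeWeight c x * killed c y x w = if x = y then 0 else c x w := by
  split_ifs with hxy
  · simp [killed, hxy]
  rw [killed_apply_of_ne hxy]
  by_cases hx : nodeWeight c x = 0
  · have hle : c x w ≤ nodeWeight c x :=
      Finset.single_le_sum (fun v _ => hc x v) (Finset.mem_univ w)
    rw [hx, zero_mul]
    exact le_antisymm (hc x w) (hx ▸ hle)
  · exact mul_div_cancel₀ _ hx

variable (hsymm : ∀ u v, c u v = c v u)
include hsymm

theorem sum_nodeWeight_mul_killed (w : V) :
    ∑ x, nodeWeight c x * killed c y x w = nodeWeight c w - c y w := by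
  simp_rw [nodeWeight_mul_killed hc, sum_ite_eq_zero_sub, nodeWeight, hsymm w]

theorem sum_mul_hitExp (hsum : ∀ w, Summable (survival c w y)) :
    ∑ w, c y w * hitExp c w y = ∑ x, nodeWeight c x - nodeWeight c y := by
  have key : ∑ x, nodeWeight c x * hitExp c x y
      = (∑ x, nodeWeight c x - nodeWeight c y)
        + ∑ w, (nodeWeight c w - c y w) * hitExp c w y :=
    calc ∑ x, nodeWeight c x * hitExp c x y
        = ∑ x, (if x = y then 0 else nodeWeight c x)
          + ∑ w, (∑ x, nodeWeight c x * killed c y x w) * hitExp c w y := by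
          simp_rw [Finset.sum_mul, mul_assoc]
          rw [Finset.sum_comm (γ := V), ← Finset.sum_add_distrib]
          refine Finset.sum_congr rfl fun x _ => ?_
          rw [hitExp_eq hsum, mul_add, Finset.mul_sum]
          split_ifs <;> simp
      _ = _ := by simp_rw [sum_ite_eq_zero_sub, sum_nodeWeight_mul_killed hc hsymm]
  simp_rw [sub_mul, Finset.sum_sub_distrib] at key
  linarith

end HitExp

theorem sum_sum_mul_hitExp {c : V → V → ℝ} (hc : ∀ u v, 0 ≤ c u v)
    (hsymm : ∀ u v, c u v = c v u) {G : SimpleGraph V} (hG : ∀ u v, G.Adj u v → 0 < c u v)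
    (hconn : G.Connected) :
    ∑ x, ∑ y, c x y * hitExp c x y = (Fintype.card V - 1) * ∑ x, nodeWeight c x := by
  rw [Finset.sum_comm]
  calc ∑ y, ∑ x, c x y * hitExp c x y = ∑ y, (∑ x, nodeWeight c x - nodeWeight c y) :=
        Finset.sum_congr rfl fun y _ => by
          simp_rw [hsymm _ y]
          exact sum_mul_hitExp hc hsymm fun w => summable_survival hc hG hconn w y
    _ = (Fintype.card V - 1) * ∑ x, nodeWeight c x := by
        rw [Finset.sum_sub_distrib, Finset.sum_const, Finset.card_univ, nsmul_eq_mul]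
        ring

/-- **Tetali's identity for unweighted graphs.** Let `G = (V,E)` be a finite
connected simple graph with `n` vertices and `m` edges. For the simple random walk on `G`
(which is the walk with conductances `c u v = 1` on edges and `0` otherwise, so that
`p x y = 1/deg x` for neighbors), the sum of expected hitting times over all ordered pairs
of adjacent vertices satisfies `∑_{(x,y) : {x,y} ∈ E} E^x(τ_y) = 2m(n − 1)`. -/
theorem tetali_identity_unweighted
    (G : SimpleGraph V) [DecidableRel G.Adj] (hconn : G.Connected) :
    ∑ p ∈ Finset.univ.filter (fun p : V × V => G.Adj p.1 p.2),
        hitExp (fun u v => if G.Adj u v then (1 : ℝ) else 0) p.1 p.2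
      = 2 * (G.edgeFinset.card : ℝ) * ((Fintype.card V : ℝ) - 1) := by
  have hsum := sum_sum_mul_hitExp (c := fun u v => if G.Adj u v then (1 : ℝ) else 0) (G := G)
    (fun u v => by positivity) (fun u v => by simp only [G.adj_comm]) (fun u v h => by simp [h])
    hconn
  have hweight (x : V) :
      nodeWeight (fun u v => if G.Adj u v then (1 : ℝ) else 0) x = G.degree x := by
    rw [nodeWeight, Finset.sum_boole, ← G.neighborFinset_eq_filter,
      G.card_neighborFinset_eq_degree]
  have hdeg : ∑ x, (G.degree x : ℝ) = 2 * G.edgeFinset.card := by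
    exact_mod_cast G.sum_degrees_eq_twice_card_edges
  simp_rw [hweight, hdeg, ite_mul, one_mul, zero_mul] at hsum
  rw [Finset.sum_filter, Fintype.sum_prod_type, hsum]
  ring
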